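/- arXiv:2504.17468 — 5 statements merged into one kernel-verified Lean document; each statement's English description precedes it below -/
import Mathlib

section
/- Let v : [0,∞) → ℝ be convex and suppose that for some index set and numbers d_a ∈ [0,∞] (a ≥ 0), the constraint v(a') - v(a) ≥ (a' - d_a)₊ - (a - d_a)₊ holds for all a, a' ≥ 0. Then for every a > 0, the one-sided derivatives satisfy v'₋(a) ≤ 1_{a > d_a} ≤ 1_{a ≥ d_a} ≤ v'₊(a). -/
open scoped ENNReal

/-- `(x - d)₊` for a deductible `d ∈ [0,∞]`, with the convention `(x - ∞)₊ = 0`. -/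
noncomputable def pp (x : ℝ) (d : ℝ≥0∞) : ℝ :=
  if d = ⊤ then 0 else max (x - d.toReal) 0

/-- under the stop-loss IC constraints, the one-sided derivatives of the
convex indirect utility `v` satisfy `v'₋(a) ≤ 1_{a > d_a} ≤ 1_{a ≥ d_a} ≤ v'₊(a)`. -/
theorem stmt3 (v : ℝ → ℝ) (hconv : ConvexOn ℝ (Set.Ici 0) v)
    (d : ℝ → ℝ≥0∞)
    (hIC : ∀ a ∈ Set.Ici (0:ℝ), ∀ a' ∈ Set.Ici (0:ℝ),
      v a' - v a ≥ pp a' (d a) - pp a (d a))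
    (a : ℝ) (ha : 0 < a) (vm vp : ℝ)
    (hm : HasDerivWithinAt v vm (Set.Icc 0 a) a)
    (hp : HasDerivWithinAt v vp (Set.Ici a) a) :
    vm ≤ (if d a < ENNReal.ofReal a then (1:ℝ) else 0) ∧
    ((if d a < ENNReal.ofReal a then (1:ℝ) else 0)
      ≤ (if d a ≤ ENNReal.ofReal a then (1:ℝ) else 0)) ∧
    ((if d a ≤ ENNReal.ofReal a then (1:ℝ) else 0) ≤ vp) := by
  rw [hasDerivWithinAt_iff_tendsto_slope] at hm hp
  have hIC' := hIC a (le_of_lt ha)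
  refine ⟨?_, ?_, ?_⟩
  · -- left derivative
    have hsub : Set.Ioo 0 a ⊆ Set.Icc 0 a \ {a} := fun x hx =>
      ⟨⟨hx.1.le, hx.2.le⟩, ne_of_lt hx.2⟩
    haveI := right_nhdsWithin_Ioo_neBot ha
    haveI hne : Filter.NeBot (nhdsWithin a (Set.Icc 0 a \ {a})) :=
      Filter.neBot_of_le (f := nhdsWithin a (Set.Ioo 0 a))
        (nhdsWithin_mono a hsub)
    by_cases hd : d a < ENNReal.ofReal a
    · simp only [hd, if_pos]
      have hdt : d a ≠ ⊤ := hd.ne_top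
      have ht : (d a).toReal < a := by
        have := (ENNReal.toReal_lt_toReal hdt (ENNReal.ofReal_ne_top)).mpr hd
        rwa [ENNReal.toReal_ofReal ha.le] at this
      refine le_of_tendsto hm ?_
      have hmem : Set.Ioi ((d a).toReal) ∈ nhdsWithin a (Set.Icc 0 a \ {a}) :=
        nhdsWithin_le_nhds (Ioi_mem_nhds ht)
      filter_upwards [self_mem_nhdsWithin, hmem] with x hx hx2
      obtain ⟨⟨hx0, hxa⟩, hxne⟩ := hx
      have hxa' : x < a := lt_of_le_of_ne hxa hxne
      have hI := hIC' x hx0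
      have hppx : pp x (d a) = x - (d a).toReal := by
        simp [pp, hdt, max_eq_left (sub_nonneg.mpr (le_of_lt (Set.mem_Ioi.mp hx2)))]
      have hppa : pp a (d a) = a - (d a).toReal := by
        simp [pp, hdt, max_eq_left (sub_nonneg.mpr ht.le)]
      rw [slope_def_field, div_le_iff_of_neg (sub_neg.mpr hxa')]
      rw [hppx, hppa] at hI
      linarith
    · simp only [hd, if_neg, not_false_iff]
      refine le_of_tendsto hm ?_
      filter_upwards [self_mem_nhdsWithin] with x hx
      obtain ⟨⟨hx0, hxa⟩, hxne⟩ := hx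
      have hxa' : x < a := lt_of_le_of_ne hxa hxne
      have hI := hIC' x hx0
      have hpp0 : pp x (d a) - pp a (d a) = 0 := by
        by_cases hdt : d a = ⊤
        · simp [pp, hdt]
        · have hat : a ≤ (d a).toReal := by
            have h1 : ENNReal.ofReal a ≤ d a := not_lt.mp hd
            have := ENNReal.toReal_mono hdt h1
            rwa [ENNReal.toReal_ofReal ha.le] at this
          simp [pp, hdt, max_eq_right (sub_nonpos.mpr (hxa.trans hat)),
            max_eq_right (sub_nonpos.mpr hat)]
      rw [slope_def_field, div_nonpos_iff]
      left
      constructor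
      · linarith [hI, hpp0]
      · linarith
  · by_cases hd : d a < ENNReal.ofReal a
    · simp [hd, hd.le]
    · simp only [hd, if_neg, not_false_iff]
      split <;> norm_num
  · -- right derivative
    have hrw : Set.Ici a \ {a} = Set.Ioi a := Set.Ici_sdiff_left
    rw [hrw] at hp
    by_cases hd : d a ≤ ENNReal.ofReal a
    · simp only [hd, if_pos]
      have hdt : d a ≠ ⊤ := fun h => by simp [h] at hd
      have ht : (d a).toReal ≤ a := by
        have := ENNReal.toReal_mono ENNReal.ofReal_ne_top hd
        rwa [ENNReal.toReal_ofReal ha.le] at this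
      refine ge_of_tendsto hp ?_
      filter_upwards [self_mem_nhdsWithin] with x hx
      have hax : a < x := hx
      have hI := hIC' x (ha.le.trans hax.le)
      have hppx : pp x (d a) = x - (d a).toReal := by
        simp [pp, hdt, max_eq_left (sub_nonneg.mpr (ht.trans hax.le))]
      have hppa : pp a (d a) = a - (d a).toReal := by
        simp [pp, hdt, max_eq_left (sub_nonneg.mpr ht)]
      rw [slope_def_field, le_div_iff₀ (sub_pos.mpr hax)]
      rw [hppx, hppa] at hI
      linarith
    · simp only [hd, if_neg, not_false_iff]
      refine ge_of_tendsto hp ?_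
      filter_upwards [self_mem_nhdsWithin] with x hx
      have hax : a < x := hx
      have hI := hIC' x (ha.le.trans hax.le)
      have hmono : pp a (d a) ≤ pp x (d a) := by
        by_cases hdt : d a = ⊤
        · simp [pp, hdt]
        · simp only [pp, hdt, if_neg, not_false_iff]
          exact max_le_max (by linarith) le_rfl
      rw [slope_def_field]
      apply div_nonneg <;> linarith
end

section
/- Let v : [0,∞) → ℝ be increasing, convex, 1-Lipschitz, with v(0) = 0, and suppose that at every point a > 0 where v is differentiable, v'(a) ∈ {0, 1}. Then there exists τ ∈ [0,∞] such that v(a) = (a - τ)₊ for all a ≥ 0. -/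
open scoped ENNReal

/-- an increasing, convex, 1-Lipschitz function on `[0,∞)` vanishing at 0
whose derivative (where it exists) takes values in `{0,1}` must be of stop-loss form
`a ↦ (a - τ)₊` for some `τ ∈ [0,∞]`. -/
theorem stmt4 (v : ℝ → ℝ)
    (hmono : MonotoneOn v (Set.Ici 0))
    (hconv : ConvexOn ℝ (Set.Ici 0) v)
    (hlip : LipschitzOnWith 1 v (Set.Ici 0))
    (h0 : v 0 = 0)
    (hder : ∀ a > (0:ℝ), DifferentiableWithinAt ℝ v (Set.Ici 0) a →
      derivWithin v (Set.Ici 0) a = 0 ∨ derivWithin v (Set.Ici 0) a = 1) :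
    ∃ τ : ℝ≥0∞, ∀ a ≥ (0:ℝ), v a = pp a τ := by
  classical
  have hnn : ∀ a ≥ (0:ℝ), 0 ≤ v a := fun a ha => h0 ▸ hmono (Set.mem_Ici.mpr le_rfl) ha ha
  have hdist : ∀ x ∈ Set.Ici (0:ℝ), ∀ y ∈ Set.Ici (0:ℝ), dist (v x) (v y) ≤ dist x y := by
    intro x hx y hy
    have := hlip.dist_le_mul x hx y hy
    simpa using this
  by_cases hzero : ∀ a ≥ (0:ℝ), v a = 0
  · exact ⟨⊤, fun a ha => by simp [pp, hzero a ha]⟩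
  push_neg at hzero
  obtain ⟨b, hb0, hbne⟩ := hzero
  have hbpos : 0 < v b := lt_of_le_of_ne (hnn b hb0) (Ne.symm hbne)
  set S : Set ℝ := {a | 0 ≤ a ∧ v a = 0} with hS
  have hSne : S.Nonempty := ⟨0, le_rfl, h0⟩
  have hSbdd : BddAbove S := by
    refine ⟨b, fun a ha => ?_⟩
    by_contra hab
    push_neg at hab
    have := hmono hb0 ha.1 hab.le
    rw [ha.2] at this
    exact absurd this (not_le.mpr hbpos)
  set t := sSup S with ht
  have ht0 : 0 ≤ t := le_csSup hSbdd ⟨le_rfl, h0⟩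
  -- v t = 0
  have hvt : v t = 0 := by
    refine le_antisymm ?_ (hnn t ht0)
    refine le_of_forall_pos_le_add ?_
    intro ε hε
    obtain ⟨s, hsS, hst⟩ := exists_lt_of_lt_csSup hSne (show t - ε < t by linarith)
    have hvs : v s = 0 := hsS.2
    have : dist (v t) (v s) ≤ dist t s := hdist t ht0 s hsS.1
    have hstle : s ≤ t := le_csSup hSbdd hsS
    rw [Real.dist_eq, Real.dist_eq, hvs, sub_zero] at this
    have := le_of_abs_le this
    rw [abs_of_nonneg (by linarith)] at this
    linarith
  -- v vanishes on [0, t]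
  have hvle : ∀ a, 0 ≤ a → a ≤ t → v a = 0 := by
    intro a ha hat
    refine le_antisymm ?_ (hnn a ha)
    have := hmono ha ht0 hat
    rw [hvt] at this; exact this
  -- v positive after t
  have hvpos : ∀ x, t < x → 0 < v x := by
    intro x hx
    rcases lt_or_eq_of_le (hnn x (le_trans ht0 hx.le)) with h | h
    · exact h
    · exact absurd (le_csSup hSbdd ⟨le_trans ht0 hx.le, h.symm⟩) (not_le.mpr hx)
  -- upper bound: v a ≤ a - t for a ≥ t
  have hub : ∀ a, t ≤ a → v a ≤ a - t := by
    intro a hat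
    have := hdist a (le_trans ht0 hat) t ht0
    rw [Real.dist_eq, Real.dist_eq, hvt, sub_zero] at this
    have h1 := le_of_abs_le this
    rwa [abs_of_nonneg (by linarith)] at h1
  -- auxiliary monotone extension
  set w : ℝ → ℝ := fun x => v (max x 0) with hw
  have hwmono : Monotone w := fun x y hxy =>
    hmono (le_max_right x 0) (le_max_right y 0) (max_le_max hxy le_rfl)
  -- lower bound: a - t ≤ v a for a > t
  have hlb : ∀ a, t < a → a - t ≤ v a := by
    intro a hta
    by_contra hcon
    push_neg at hcon
    -- find differentiable point x ∈ (t, a - v a)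
    have hIoo : t < a - v a := by linarith
    have hmeas : (MeasureTheory.volume (Set.Ioo t (a - v a))) ≠ 0 := by
      rw [Real.volume_Ioo]
      simp only [ne_eq, ENNReal.ofReal_eq_zero, not_le]
      linarith
    obtain ⟨x, hxmem, hxdiff⟩ := MeasureTheory.Measure.exists_mem_of_measure_ne_zero_of_ae hmeas
      (MeasureTheory.ae_restrict_of_ae hwmono.ae_differentiableAt)
    have hxt : t < x := hxmem.1
    have hxa : x < a := by
      have : v a ≥ 0 := hnn a (le_trans ht0 hta.le)
      have := hxmem.2
      linarith
    have hxpos : 0 < x := lt_of_le_of_lt ht0 hxt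
    -- w = v near x
    have heq : w =ᶠ[nhds x] v := by
      filter_upwards [Ioi_mem_nhds hxpos] with y hy
      simp [hw, max_eq_left (le_of_lt (Set.mem_Ioi.mp hy))]
    have hvdiff : DifferentiableAt ℝ v x := heq.differentiableAt_iff.mp hxdiff
    have hvdw : DifferentiableWithinAt ℝ v (Set.Ici 0) x := hvdiff.differentiableWithinAt
    have hxmemI : x ∈ Set.Ici (0:ℝ) := le_of_lt hxpos
    have hamemI : a ∈ Set.Ici (0:ℝ) := le_trans ht0 (le_of_lt hta)
    have htmemI : t ∈ Set.Ici (0:ℝ) := ht0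
    rcases hder x hxpos hvdw with hd0 | hd1
    · -- derivative 0 : contradiction with v x > 0
      have hs := hconv.slope_le_derivWithin htmemI hxmemI hxt hvdw
      rw [hd0, slope_def_field, hvt] at hs
      have hxvpos := hvpos x hxt
      have : (v x - 0) / (x - t) ≤ 0 := by
        rw [div_nonpos_iff] at hs ⊢
        · rcases hs with h | h
          · left; constructor <;> [exact h.1; linarith [h.2]]
          · exact Or.inr ⟨h.1, h.2⟩
      rw [sub_zero, div_nonpos_iff] at this
      rcases this with h | h
      · linarith [h.1, hxvpos]
      · linarith [h.2, hxt]
    · -- derivative 1 : v a ≥ v x + (a - x) > a - x > v a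
      have hs := hconv.derivWithin_le_slope hxmemI hamemI hxa hvdw
      rw [hd1, slope_def_field] at hs
      have hax : 0 < a - x := by linarith
      have h2 : a - x ≤ v a - v x := by
        rw [le_div_iff₀ hax] at hs
        linarith
      have hxvpos := hvpos x hxt
      have := hxmem.2
      linarith
  refine ⟨ENNReal.ofReal t, fun a ha => ?_⟩
  rw [pp, if_neg ENNReal.ofReal_ne_top, ENNReal.toReal_ofReal ht0]
  rcases le_or_gt a t with hat | hta
  · rw [hvle a ha hat, max_eq_right (by linarith)]
  · rw [max_eq_left (by linarith [hub a hta.le])]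
    exact le_antisymm (hub a hta.le) (hlb a hta)
end

section
/- Let g : [0,∞) → ℝ be increasing and convex. Then there is a Radon (locally finite Borel) measure γ on [0,∞) with γ[0,x] = g'₊(x) for all x ≥ 0, and g(a) = g(0) + ∫_{[0,∞)} (a - t)₊ γ(dt) for all a ≥ 0 (Breeden–Litzenberger representation). -/
open MeasureTheory Set Filter Topology

/-- Breeden–Litzenberger: every increasing convex `g : [0,∞) → ℝ`
with right derivative `g'` admits a Radon measure `γ` on `[0,∞)` with
`γ[0,x] = g'₊(x)` and `g(a) = g(0) + ∫ (a - t)₊ γ(dt)`. -/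
theorem stmt9 (g : ℝ → ℝ) (hmono : MonotoneOn g (Set.Ici 0))
    (hconv : ConvexOn ℝ (Set.Ici 0) g)
    (g' : ℝ → ℝ) (hg' : ∀ x ≥ (0:ℝ), HasDerivWithinAt g (g' x) (Set.Ici x) x) :
    ∃ γ : Measure ℝ, IsLocallyFiniteMeasure γ ∧
      γ (Set.Iio 0) = 0 ∧
      (∀ x ≥ (0:ℝ), γ (Set.Icc 0 x) = ENNReal.ofReal (g' x)) ∧
      (∀ a ≥ (0:ℝ), g a = g 0 + ∫ t, max (a - t) 0 ∂γ) := by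
  -- the slope of `g` at `x` from the right tends to `g' x`
  have hT : ∀ x : ℝ, 0 ≤ x → Tendsto (slope g x) (𝓝[>] x) (𝓝 (g' x)) := by
    intro x hx
    have := hasDerivWithinAt_iff_tendsto_slope.1 (hg' x hx)
    rwa [Set.Ici_sdiff_left] at this
  -- `g' x` is below every right secant slope
  have hA : ∀ x : ℝ, 0 ≤ x → ∀ y : ℝ, x < y → g' x ≤ (g y - g x) / (y - x) := by
    intro x hx y hxy
    refine le_of_tendsto (hT x hx) ?_
    filter_upwards [Ioo_mem_nhdsGT_of_mem ⟨le_refl x, hxy⟩] with s hs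
    have h := hconv.secant_mono (a := x) (x := s) (y := y) hx
      (hx.trans hs.1.le) (hx.trans hxy.le) hs.1.ne' hxy.ne' hs.2.le
    simpa [slope_def_field] using h
  -- `g' y` is above every left secant slope
  have hB : ∀ x : ℝ, 0 ≤ x → ∀ y : ℝ, x < y → (g y - g x) / (y - x) ≤ g' y := by
    intro x hx y hxy
    have hy : (0:ℝ) ≤ y := hx.trans hxy.le
    refine ge_of_tendsto (hT y hy) ?_
    filter_upwards [self_mem_nhdsWithin] with s hs
    have h := hconv.slope_mono_adjacent (x := x) (y := y) (z := s) hx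
      (hy.trans (le_of_lt hs)) hxy hs
    simpa [slope_def_field] using h
  have hg'_nonneg : ∀ x : ℝ, 0 ≤ x → 0 ≤ g' x := by
    intro x hx
    refine ge_of_tendsto (hT x hx) ?_
    filter_upwards [self_mem_nhdsWithin] with s hs
    have : g x ≤ g s := hmono hx (hx.trans (le_of_lt hs)) (le_of_lt hs)
    have h1 : (0:ℝ) ≤ g s - g x := by linarith
    have h2 : (0:ℝ) ≤ s - x := by simp only [mem_Ioi] at hs; linarith
    simpa [slope_def_field] using div_nonneg h1 h2
  have hg'_mono : MonotoneOn g' (Set.Ici 0) := by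
    intro x hx y hy hxy
    rcases eq_or_lt_of_le hxy with rfl | hlt
    · exact le_rfl
    · exact (hA x hx y hlt).trans (hB x hx y hlt)
  -- the extended right derivative
  set f : ℝ → ℝ := fun x => if 0 ≤ x then g' x else 0 with hf_def
  have f_of_nonneg : ∀ x : ℝ, 0 ≤ x → f x = g' x := fun x hx => if_pos hx
  have f_of_neg : ∀ x : ℝ, x < 0 → f x = 0 := fun x hx => if_neg (not_le.2 hx)
  have f_mono : Monotone f := by
    intro x y hxy
    by_cases hx : 0 ≤ x
    · rw [f_of_nonneg x hx, f_of_nonneg y (hx.trans hxy)]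
      exact hg'_mono hx (hx.trans hxy) hxy
    · rw [f_of_neg x (not_le.1 hx)]
      by_cases hy : 0 ≤ y
      · rw [f_of_nonneg y hy]; exact hg'_nonneg y hy
      · rw [f_of_neg y (not_le.1 hy)]
  -- right-continuity of `f`
  have f_rc : ∀ x : ℝ, ContinuousWithinAt f (Set.Ici x) x := by
    intro x
    rcases lt_or_ge x 0 with hx | hx
    · have he : f =ᶠ[𝓝 x] fun _ => (0:ℝ) := by
        filter_upwards [Iio_mem_nhds hx] with y hy
        exact f_of_neg y hy
      have : ContinuousWithinAt (fun _ => (0:ℝ)) (Set.Ici x) x := continuousWithinAt_const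
      exact this.congr_of_eventuallyEq (he.filter_mono nhdsWithin_le_nhds)
        (f_of_neg x hx)
    · rw [ContinuousWithinAt]
      refine tendsto_order.2 ⟨?_, ?_⟩
      · intro b hb
        filter_upwards [self_mem_nhdsWithin] with y hy
        exact hb.trans_le (f_mono hy)
      · intro b hb
        rw [f_of_nonneg x hx] at hb
        set ε : ℝ := (b - g' x) / 2 with hε_def
        have hε : 0 < ε := by simp only [hε_def]; linarith
        -- choose z > x with slope g x z < g' x + ε
        have h1 : ∀ᶠ z in 𝓝[>] x, slope g x z < g' x + ε :=
          (hT x hx).eventually_lt_const (by linarith)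
        obtain ⟨z, hz1, hzx⟩ : ∃ z, slope g x z < g' x + ε ∧ x < z := by
          rcases (h1.and self_mem_nhdsWithin).exists with ⟨z, h, h'⟩
          exact ⟨z, h, h'⟩
        -- the map `y ↦ slope g y z` is continuous from the right at `x`
        have hgc : Tendsto g (𝓝[>] x) (𝓝 (g x)) :=
          ((hg' x hx).continuousWithinAt).mono_left
            (nhdsWithin_mono x (Ioi_subset_Ici_self))
        have hsl : Tendsto (fun y => (g z - g y) / (z - y)) (𝓝[>] x)
            (𝓝 ((g z - g x) / (z - x))) := by
          apply Tendsto.div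
          · exact tendsto_const_nhds.sub hgc
          · exact tendsto_const_nhds.sub
              (tendsto_id.mono_left nhdsWithin_le_nhds)
          · exact sub_ne_zero.2 hzx.ne'
        have hval : (g z - g x) / (z - x) < g' x + 2 * ε := by
          have : slope g x z = (g z - g x) / (z - x) := slope_def_field g x z
          rw [this] at hz1; linarith
        have h2 : ∀ᶠ y in 𝓝[>] x, (g z - g y) / (z - y) < g' x + 2 * ε :=
          hsl.eventually_lt_const hval
        obtain ⟨y₀, hy₀s, hy₀⟩ : ∃ y₀, (g z - g y₀) / (z - y₀) < g' x + 2 * ε ∧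
            y₀ ∈ Set.Ioo x z := by
          rcases (h2.and (Ioo_mem_nhdsGT_of_mem ⟨le_refl x, hzx⟩)).exists with ⟨y₀, h, h'⟩
          exact ⟨y₀, h, h'⟩
        have hy₀0 : (0:ℝ) ≤ y₀ := hx.trans hy₀.1.le
        have hfy₀ : f y₀ < b := by
          rw [f_of_nonneg y₀ hy₀0]
          have := hA y₀ hy₀0 z hy₀.2
          have hb2 : g' x + 2 * ε = b := by simp only [hε_def]; ring
          calc g' y₀ ≤ (g z - g y₀) / (z - y₀) := this
            _ < g' x + 2 * ε := hy₀s
            _ = b := hb2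
        filter_upwards [Ico_mem_nhdsGE_of_mem ⟨le_refl x, hy₀.1⟩] with y hy
        exact lt_of_le_of_lt (f_mono hy.2.le) hfy₀
  -- the Stieltjes measure
  set S : StieltjesFunction ℝ := ⟨f, f_mono, f_rc⟩ with hS_def
  set γ : Measure ℝ := S.measure with hγ_def
  have f_bot : Tendsto (⇑S) atBot (𝓝 0) := by
    apply Tendsto.congr' _ tendsto_const_nhds
    filter_upwards [eventually_lt_atBot (0:ℝ)] with y hy
    exact (f_of_neg y hy).symm
  have hIic : ∀ s : ℝ, γ (Set.Iic s) = ENNReal.ofReal (f s) := by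
    intro s
    have := S.measure_Iic f_bot s
    simpa using this
  have hIio : γ (Set.Iio 0) = 0 := by
    have hsub : Set.Iio (0:ℝ) ⊆ ⋃ n : ℕ, Set.Iic (-((n:ℝ) + 1)⁻¹) := by
      intro x hx
      simp only [Set.mem_Iio] at hx
      obtain ⟨n, hn⟩ := exists_nat_one_div_lt (show (0:ℝ) < -x by linarith)
      rw [one_div] at hn
      exact Set.mem_iUnion.2 ⟨n, by simp only [Set.mem_Iic]; push_cast; linarith⟩
    refine le_antisymm (le_trans (measure_mono hsub) ?_) (zero_le)
    refine le_trans (measure_iUnion_le _) ?_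
    have h0 : ∀ n : ℕ, γ (Set.Iic (-((n:ℝ) + 1)⁻¹)) = 0 := by
      intro n
      rw [hIic, f_of_neg]
      · simp
      · have : (0:ℝ) < ((n:ℝ) + 1)⁻¹ := by positivity
        linarith
    simp [h0]
  have htd : Tendsto f (𝓝[<] (0:ℝ)) (𝓝 0) := by
    apply Tendsto.congr' _ tendsto_const_nhds
    filter_upwards [self_mem_nhdsWithin] with y hy
    exact (f_of_neg y hy).symm
  have leftLim0 : Function.leftLim f 0 = 0 :=
    leftLim_eq_of_tendsto htd
  have hIcc : ∀ x ≥ (0:ℝ), γ (Set.Icc 0 x) = ENNReal.ofReal (g' x) := by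
    intro x hx
    rw [hγ_def, S.measure_Icc 0 x]
    have : (⇑S) x = g' x := f_of_nonneg x hx
    rw [show Function.leftLim (⇑S) 0 = 0 from leftLim0, this, sub_zero]
  refine ⟨γ, inferInstance, hIio, hIcc, ?_⟩
  intro a ha
  have hga : g 0 ≤ g a := hmono (Set.mem_Ici.2 (le_refl (0:ℝ))) ha ha
  -- measurability of the payoff
  have hmeas : Measurable fun t : ℝ => max (a - t) 0 :=
    ((measurable_const.sub measurable_id).max measurable_const)
  -- FTC for the right derivative
  have hgcont : ContinuousOn g (Set.Icc 0 a) := by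
    intro x hx
    rcases eq_or_lt_of_le hx.1 with heq | hx0
    · have hx0' : x = 0 := heq.symm
      subst hx0'
      exact ((hg' 0 le_rfl).continuousWithinAt).mono (fun y hy => hy.1)
    · have hconv' : ConvexOn ℝ (Set.Ioi 0) g :=
        hconv.subset Ioi_subset_Ici_self (convex_Ioi 0)
      have hco := hconv'.continuousOn isOpen_Ioi
      exact (hco.continuousAt (Ioi_mem_nhds hx0)).continuousWithinAt
  have hderiv : ∀ x ∈ Set.Ioo 0 a, HasDerivWithinAt g (g' x) (Set.Ioi x) x :=
    fun x hx => (hg' x hx.1.le).mono Ioi_subset_Ici_self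
  have hII : IntervalIntegrable g' volume 0 a := by
    apply MonotoneOn.intervalIntegrable
    rw [Set.uIcc_of_le ha]
    exact hg'_mono.mono (fun y hy => hy.1)
  have hFTC : ∫ u in (0:ℝ)..a, g' u = g a - g 0 :=
    intervalIntegral.integral_eq_sub_of_hasDeriv_right_of_le ha hgcont hderiv hII
  have hInt : IntegrableOn g' (Set.Ioc 0 a) volume := hII.1
  have hnn : 0 ≤ᵐ[volume.restrict (Set.Ioc 0 a)] g' := by
    rw [EventuallyLE, ae_restrict_iff' measurableSet_Ioc]
    exact ae_of_all _ fun u hu => hg'_nonneg u hu.1.le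
  -- layer-cake
  have key : ∫⁻ t, ENNReal.ofReal (max (a - t) 0) ∂γ = ENNReal.ofReal (g a - g 0) := by
    rw [lintegral_eq_lintegral_meas_le (f := fun t : ℝ => max (a - t) 0) γ
      (ae_of_all _ fun t => le_max_right _ _) hmeas.aemeasurable]
    have h1 : ∀ s ∈ Set.Ioi (0:ℝ),
        γ {t : ℝ | s ≤ max (a - t) 0} = ENNReal.ofReal (f (a - s)) := by
      intro s hs
      simp only [Set.mem_Ioi] at hs
      have hset : {t : ℝ | s ≤ max (a - t) 0} = Set.Iic (a - s) := by
        ext t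
        simp only [Set.mem_setOf_eq, Set.mem_Iic, le_max_iff]
        constructor
        · rintro (h | h)
          · linarith
          · linarith
        · intro h; left; linarith
      rw [hset, hIic]
    rw [setLIntegral_congr_fun measurableSet_Ioi h1]
    have hmap : Measure.map (fun s : ℝ => a - s) volume = volume :=
      Measure.map_sub_left_eq_self volume a
    have hGm : Measurable fun u : ℝ => ENNReal.ofReal (f u) :=
      ENNReal.measurable_ofReal.comp f_mono.measurable
    calc ∫⁻ s in Set.Ioi (0:ℝ), ENNReal.ofReal (f (a - s))
        = ∫⁻ s, (Set.Ioi (0:ℝ)).indicator (fun s => ENNReal.ofReal (f (a - s))) s := by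
          rw [lintegral_indicator measurableSet_Ioi]
      _ = ∫⁻ s, (Set.Iio a).indicator (fun u => ENNReal.ofReal (f u)) (a - s) := by
          congr 1
          ext s
          simp only [Set.indicator_apply, Set.mem_Ioi, Set.mem_Iio, sub_lt_self_iff]
      _ = ∫⁻ u, (Set.Iio a).indicator (fun u => ENNReal.ofReal (f u)) u := by
          conv_rhs => rw [← hmap]
          rw [lintegral_map (hGm.indicator measurableSet_Iio)
            (show Measurable fun s : ℝ => a - s from measurable_const.sub measurable_id')]
      _ = ∫⁻ u in Set.Iio a, ENNReal.ofReal (f u) := by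
          rw [lintegral_indicator measurableSet_Iio]
      _ = ∫⁻ u in Set.Iio 0 ∪ Set.Ico 0 a, ENNReal.ofReal (f u) := by
          rw [Set.Iio_union_Ico_eq_Iio ha]
      _ = (∫⁻ u in Set.Iio 0, ENNReal.ofReal (f u))
            + ∫⁻ u in Set.Ico 0 a, ENNReal.ofReal (f u) := by
          have hdisj : Disjoint (Set.Iio (0:ℝ)) (Set.Ico 0 a) :=
            Set.disjoint_left.2 fun u (hu : u < 0) hu' => absurd hu'.1 (not_le.2 hu)
          rw [lintegral_union measurableSet_Ico hdisj]
      _ = ∫⁻ u in Set.Ico 0 a, ENNReal.ofReal (g' u) := by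
          have h0 : ∫⁻ u in Set.Iio (0:ℝ), ENNReal.ofReal (f u) = 0 := by
            rw [setLIntegral_congr_fun measurableSet_Iio
              (fun u (hu : u < 0) => by
                rw [f_of_neg u hu, ENNReal.ofReal_zero])]
            exact lintegral_zero
          rw [h0, zero_add]
          exact setLIntegral_congr_fun measurableSet_Ico
            (fun u hu => by rw [f_of_nonneg u hu.1])
      _ = ∫⁻ u in Set.Ioc 0 a, ENNReal.ofReal (g' u) := by
          rw [Measure.restrict_congr_set Ico_ae_eq_Ioc]
      _ = ENNReal.ofReal (∫ u in Set.Ioc 0 a, g' u) :=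
          (ofReal_integral_eq_lintegral_ofReal hInt hnn).symm
      _ = ENNReal.ofReal (g a - g 0) := by
          rw [← intervalIntegral.integral_of_le ha, hFTC]
  have hint : ∫ t, max (a - t) 0 ∂γ = g a - g 0 := by
    rw [integral_eq_lintegral_of_nonneg_ae (f := fun t : ℝ => max (a - t) 0)
      (ae_of_all _ fun t => le_max_right _ _)
      hmeas.aestronglyMeasurable, key, ENNReal.toReal_ofReal (by linarith)]
  rw [hint]; ring
end

section
/- Let v(a) = (a - τ)₊ for some τ ∈ [0,∞), and suppose λ ∈ [0,1] and d ∈ [0,∞] satisfy the incentive compatibility constraint v(a') - v(a) ≥ λ[(a' - d)₊ - (a - d)₊] for all a' ≥ 0, where a < τ. Then either λ = 0, or d ≥ τ. In particular, the achievable value λ(a - d)₊ is zero. -/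
/-!
Deviating to `a' = τ` costs the agent nothing, since `v` vanishes on `[0, τ]`; so incentive
compatibility forces `λ (τ - d)₊ ≤ λ (a - d)₊`. For `λ > 0` this is impossible when `d < τ`,
because `(· - d)₊` is strictly increasing beyond `d`. Hence `d ≥ τ > a` and `(a - d)₊ = 0`.
-/

open scoped ENNReal

theorem pp_top (x : ℝ) : pp x ⊤ = 0 := if_pos rfl

theorem pp_of_ne_top {d : ℝ≥0∞} (hd : d ≠ ⊤) (x : ℝ) : pp x d = max (x - d.toReal) 0 :=
  if_neg hd

theorem pp_eq_zero_of_ofReal_le {x : ℝ} {d : ℝ≥0∞} (h : ENNReal.ofReal x ≤ d) : pp x d = 0 := by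
  by_cases hd : d = ⊤
  · rw [hd, pp_top]
  · rw [pp_of_ne_top hd, max_eq_right]
    linarith [(ENNReal.ofReal_le_iff_le_toReal hd).1 h]

theorem pp_lt_pp_of_lt_ofReal {x y : ℝ} {d : ℝ≥0∞} (hxy : x < y) (hd : d < ENNReal.ofReal y) :
    pp x d < pp y d := by
  have hd' : d ≠ ⊤ := hd.ne_top
  have hdy : d.toReal < y := (ENNReal.lt_ofReal_iff_toReal_lt hd').1 hd
  rw [pp_of_ne_top hd', pp_of_ne_top hd', max_eq_left (sub_nonneg.2 hdy.le)]
  exact max_lt (by linarith) (by linarith)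

theorem stmt14_general (τ : ℝ) (hτ : 0 ≤ τ) (a : ℝ) (haτ : a < τ)
    (l : ℝ) (hl0 : 0 ≤ l) (d : ℝ≥0∞)
    (hIC : ∀ a' ≥ (0:ℝ),
      max (a' - τ) 0 - max (a - τ) 0 ≥ l * (pp a' d - pp a d)) :
    (l = 0 ∨ ENNReal.ofReal τ ≤ d) ∧ l * pp a d = 0 := by
  rcases hl0.eq_or_lt with rfl | hl
  · simp
  have hτd : ENNReal.ofReal τ ≤ d := by
    have hdeviation : l * (pp τ d - pp a d) ≤ 0 := by
      simpa [max_eq_right (sub_neg.2 haτ).le] using hIC τ hτ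
    by_contra! hd
    nlinarith [pp_lt_pp_of_lt_ofReal haτ hd]
  refine ⟨Or.inr hτd, ?_⟩
  rw [pp_eq_zero_of_ofReal_le ((ENNReal.ofReal_le_ofReal haτ.le).trans hτd), mul_zero]

/-- for `v(a) = (a - τ)₊`, `a < τ`, and a change-loss contract
`(λ, d)` satisfying the IC constraint, either `λ = 0` or `d ≥ τ`; in particular
the achievable value `λ(a - d)₊` is zero. -/
theorem stmt14 (τ : ℝ) (hτ : 0 ≤ τ) (a : ℝ) (ha : 0 ≤ a) (haτ : a < τ)
    (l : ℝ) (hl0 : 0 ≤ l) (hl1 : l ≤ 1) (d : ℝ≥0∞)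
    (hIC : ∀ a' ≥ (0:ℝ),
      max (a' - τ) 0 - max (a - τ) 0 ≥ l * (pp a' d - pp a d)) :
    (l = 0 ∨ ENNReal.ofReal τ ≤ d) ∧ l * pp a d = 0 :=
  stmt14_general τ hτ a haτ l hl0 d hIC
end

section
/- Let v : [0,∞) → ℝ be convex increasing with v(0) = 0, fix a > 0 with v(a) > 0, and let λ > 0, d ∈ [0,∞) satisfy: λ ∈ [v'₋(a), v'₊(a)] and d ≤ a - v(a)/λ. Then v(a') - v(a) ≥ λ[(a' - d)₊ - (a - d)₊] for all a' ≥ 0. Conversely, if this inequality holds for all a' ≥ 0 and additionally d < a and λ > 0, then λ ∈ [v'₋(a), v'₊(a)] and d ≤ a - v(a)/λ. -/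
/-- characterization of the change-loss IC constraint at a point `a > τ_v`.
For convex increasing `v` with `v(0) = 0`, `v(a) > 0`, `λ > 0`: if
`λ ∈ [v'₋(a), v'₊(a)]` and `d ≤ a - v(a)/λ`, then the IC constraint
`v(a') - v(a) ≥ λ[(a' - d)₊ - (a - d)₊]` holds for all `a' ≥ 0`; conversely, if the
IC constraint holds and moreover `d < a`, then `λ ∈ [v'₋(a), v'₊(a)]` and
`d ≤ a - v(a)/λ`. -/
theorem stmt15 (v : ℝ → ℝ) (hconv : ConvexOn ℝ (Set.Ici 0) v)
    (hmono : MonotoneOn v (Set.Ici 0)) (h0 : v 0 = 0)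
    (a : ℝ) (ha : 0 < a) (hva : 0 < v a)
    (l : ℝ) (hl : 0 < l) (d : ℝ) (hd : 0 ≤ d)
    (vm vp : ℝ)
    (hm : HasDerivWithinAt v vm (Set.Icc 0 a) a)
    (hp : HasDerivWithinAt v vp (Set.Ici a) a) :
    ((vm ≤ l ∧ l ≤ vp ∧ d ≤ a - v a / l) →
      ∀ a' ≥ (0:ℝ), v a' - v a ≥ l * (max (a' - d) 0 - max (a - d) 0)) ∧
    (((∀ a' ≥ (0:ℝ), v a' - v a ≥ l * (max (a' - d) 0 - max (a - d) 0)) ∧ d < a) →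
      (vm ≤ l ∧ l ≤ vp ∧ d ≤ a - v a / l)) := by
  have hpt : Filter.Tendsto (slope v a) (nhdsWithin a (Set.Ioi a)) (nhds vp) := by
    have := hasDerivWithinAt_iff_tendsto_slope.mp hp
    rwa [Set.Ici_sdiff_left] at this
  have hmt : Filter.Tendsto (slope v a) (nhdsWithin a (Set.Iio a)) (nhds vm) := by
    have := hasDerivWithinAt_iff_tendsto_slope.mp hm
    rw [show Set.Icc 0 a \ {a} = Set.Ico 0 a from Set.Icc_sdiff_right,
      nhdsWithin_Ico_eq_nhdsLT ha] at this
    exact this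
  -- subgradient inequalities
  have hsub_p : ∀ a', a < a' → vp ≤ (v a' - v a) / (a' - a) := by
    intro a' haa'
    refine le_of_tendsto hpt ?_
    filter_upwards [self_mem_nhdsWithin,
      eventually_nhdsWithin_of_eventually_nhds (eventually_lt_nhds haa')] with y hy1 hy2
    rw [slope_def_field]
    exact hconv.secant_mono (le_of_lt ha) (le_of_lt (lt_trans ha hy1))
      (le_of_lt (lt_trans ha haa')) (ne_of_gt hy1) (ne_of_gt haa') (le_of_lt hy2)
  have hsub_m : ∀ a', 0 ≤ a' → a' < a → (v a' - v a) / (a' - a) ≤ vm := by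
    intro a' ha'0 haa'
    refine ge_of_tendsto hmt ?_
    filter_upwards [self_mem_nhdsWithin,
      eventually_nhdsWithin_of_eventually_nhds (eventually_gt_nhds haa')] with y hy1 hy2
    rw [slope_def_field]
    exact hconv.secant_mono (le_of_lt ha) ha'0
      (le_of_lt (lt_of_le_of_lt ha'0 hy2)) (ne_of_lt haa') (ne_of_lt hy1) (le_of_lt hy2)
  constructor
  · rintro ⟨h1, h2, h3⟩ a' ha'
    have hval : 0 < v a / l := div_pos hva hl
    have hda : d < a := by linarith
    have hld : v a ≤ l * (a - d) := by
      have h4 : v a / l ≤ a - d := by linarith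
      calc v a = l * (v a / l) := by field_simp
        _ ≤ l * (a - d) := by nlinarith
    have hmaxa : max (a - d) 0 = a - d := max_eq_left (by linarith)
    rcases lt_or_ge a' d with hcase | hcase
    · have hmaxa' : max (a' - d) 0 = 0 := max_eq_right (by linarith)
      have hva' : 0 ≤ v a' := by
        rw [← h0]; exact hmono Set.self_mem_Ici ha' ha'
      rw [hmaxa, hmaxa']; nlinarith
    · have hmaxa' : max (a' - d) 0 = a' - d := max_eq_left (by linarith)
      rw [hmaxa, hmaxa']
      rcases lt_trichotomy a' a with hc | hc | hc
      · have := hsub_m a' ha' hc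
        rw [div_le_iff_of_neg (by linarith)] at this
        nlinarith
      · subst hc; simp
      · have := hsub_p a' hc
        rw [le_div_iff₀ (by linarith)] at this
        nlinarith
  · rintro ⟨hIC, hda⟩
    have hmaxa : max (a - d) 0 = a - d := max_eq_left (by linarith)
    have h3 : v a ≤ l * (a - d) := by
      have := hIC 0 le_rfl
      rw [h0, hmaxa, max_eq_right (by linarith)] at this
      nlinarith
    refine ⟨?_, ?_, ?_⟩
    · refine le_of_tendsto hmt ?_
      filter_upwards [self_mem_nhdsWithin,
        eventually_nhdsWithin_of_eventually_nhds (eventually_gt_nhds hda)] with y hy1 hy2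
      rw [slope_def_field]
      have hy1' : y < a := hy1
      have := hIC y (le_of_lt (lt_of_le_of_lt hd hy2))
      rw [hmaxa, max_eq_left (by linarith)] at this
      rw [div_le_iff_of_neg (by linarith)]
      nlinarith
    · refine ge_of_tendsto hpt ?_
      filter_upwards [self_mem_nhdsWithin] with y hy1
      have hy1' : a < y := hy1
      rw [slope_def_field]
      have := hIC y (by linarith)
      rw [hmaxa, max_eq_left (by linarith)] at this
      rw [le_div_iff₀ (by linarith)]
      nlinarith
    · have : v a / l ≤ a - d := (div_le_iff₀ hl).mpr (by linarith)
      linarith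
end
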